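/- Let Φ : ℝⁿ → ℝ be a C² function whose gradient ∇Φ = (∂Φ/∂x_1, …, ∂Φ/∂x_n) has bounded C¹ norm. Then the Cauchy problem for the multidimensional Burgers system ∂u/∂t + Σ_{j=1}^n u_j ∂u/∂x_j = 0 on [0,∞) × ℝⁿ with initial data u(0,x) = ∇Φ(x) has a unique global C¹ solution on [0,∞) × ℝⁿ if and only if the Hessian matrix Hess Φ(x) is positive semidefinite for every x ∈ ℝⁿ. -/

import Mathlib

/-- The gradient `∇Φ(x) = (∂Φ/∂x₁, …, ∂Φ/∂xₙ)(x)`. -/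
noncomputable def gradFn {n : ℕ} (Φ : (Fin n → ℝ) → ℝ) (x : Fin n → ℝ) : Fin n → ℝ :=
  fun i => fderiv ℝ Φ x (Pi.single i 1)

/-- The Hessian matrix `Hess Φ(x) = (∂²Φ/∂xᵢ∂xⱼ)(x)`. -/
noncomputable def hessMat {n : ℕ} (Φ : (Fin n → ℝ) → ℝ) (x : Fin n → ℝ) :
    Matrix (Fin n) (Fin n) ℝ :=
  Matrix.of fun i j => iteratedFDeriv ℝ 2 Φ x ![Pi.single i 1, Pi.single j 1]

/-- `u : ℝ → (Fin n → ℝ) → (Fin n → ℝ)` is a global `C^k` solution on `[0,∞) × ℝⁿ` of the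
multidimensional Burgers system `∂u/∂t + ∑ⱼ uⱼ ∂u/∂xⱼ = 0` with initial data `φ`. -/
def IsGlobalSolBurgers (n : ℕ) (φ : (Fin n → ℝ) → (Fin n → ℝ)) (k : ℕ∞)
    (u : ℝ → (Fin n → ℝ) → (Fin n → ℝ)) : Prop :=
  ContDiffOn ℝ k (fun p : ℝ × (Fin n → ℝ) => u p.1 p.2) (Set.Ici 0 ×ˢ Set.univ) ∧
  (∀ x, u 0 x = φ x) ∧
  ∀ t ∈ Set.Ici (0 : ℝ), ∀ x : Fin n → ℝ, ∀ i : Fin n,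
    derivWithin (fun s => u s x i) (Set.Ici 0) t
      + ∑ j : Fin n, u t x j * fderiv ℝ (fun y => u t y i) x (Pi.single j 1) = 0

/-!
Every `C¹` solution is constant along the characteristic lines `s ↦ (s, y + s ∇Φ(y))`: along
such a line `u - ∇Φ(y)` solves a linear ODE with zero initial value (Grönwall). Differentiating
`u(t, y + t ∇Φ(y)) = ∇Φ(y)` in `y` shows that `I + t Hess Φ` has no kernel for `t ≥ 0`, so a
negative eigenvalue `μ` of a Hessian rules out any solution that exists up to time `-1/μ`.

Conversely, if all Hessians are positive semidefinite, `y ↦ y + t ∇Φ(y)` is strongly monotone for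
`t ≥ 0`, hence a bijection: its range is open by the inverse function theorem and closed since the
map is antilipschitz, hence proper. Then `u(t, x) = ∇Φ(y)` with `y + t ∇Φ(y) = x` solves the
problem; it is `C¹` up to `t = 0` because the local inverse of `(t, y) ↦ (t, y + t ∇Φ(y))` is
defined on a full neighbourhood, and it is the only solution by the first remark.
-/

open Set Matrix

section Hessian

variable {n : ℕ} {Φ : (Fin n → ℝ) → ℝ}

theorem contDiff_gradFn (hΦ : ContDiff ℝ 2 Φ) : ContDiff ℝ 1 (gradFn Φ) :=
  contDiff_pi.2 fun _ => (hΦ.fderiv_right (by norm_num)).clm_apply contDiff_const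

theorem fderiv_gradFn_apply (hΦ : ContDiff ℝ 2 Φ) (x w : Fin n → ℝ) (i : Fin n) :
    fderiv ℝ (gradFn Φ) x w i = fderiv ℝ (fderiv ℝ Φ) x w (Pi.single i 1) := by
  have hD : HasFDerivAt (fderiv ℝ Φ) (fderiv ℝ (fderiv ℝ Φ) x) x :=
    ((hΦ.fderiv_right (by norm_num)).differentiable one_ne_zero x).hasFDerivAt
  have hgrad : HasFDerivAt (gradFn Φ)
      (ContinuousLinearMap.pi fun i => (ContinuousLinearMap.apply ℝ ℝ (Pi.single i 1)).comp
        (fderiv ℝ (fderiv ℝ Φ) x)) x :=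
    hasFDerivAt_pi.2 fun i => by
      exact (ContinuousLinearMap.apply ℝ ℝ (Pi.single i 1)).hasFDerivAt.comp x hD
  rw [hgrad.fderiv]
  rfl

theorem hessMat_apply (x : Fin n → ℝ) (i j : Fin n) :
    hessMat Φ x i j = fderiv ℝ (fderiv ℝ Φ) x (Pi.single i 1) (Pi.single j 1) := by
  simp [hessMat, iteratedFDeriv_two_apply]

theorem isHermitian_hessMat (hΦ : ContDiff ℝ 2 Φ) (x : Fin n → ℝ) :
    (hessMat Φ x).IsHermitian := by
  ext i j
  simp only [conjTranspose_apply, star_trivial, hessMat_apply]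
  exact (hΦ.contDiffAt.isSymmSndFDerivAt (by simp)).eq _ _

theorem hessMat_mulVec (hΦ : ContDiff ℝ 2 Φ) (x w : Fin n → ℝ) :
    hessMat Φ x *ᵥ w = fderiv ℝ (gradFn Φ) x w := by
  ext i
  rw [fderiv_gradFn_apply hΦ, (hΦ.contDiffAt.isSymmSndFDerivAt (by simp)).eq]
  conv_rhs => rw [pi_eq_sum_univ' w]
  simp [mulVec, dotProduct, hessMat_apply, mul_comm]

theorem dotProduct_fderiv_gradFn_nonneg (hΦ : ContDiff ℝ 2 Φ) {x : Fin n → ℝ}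
    (hx : (hessMat Φ x).PosSemidef) (v : Fin n → ℝ) :
    0 ≤ v ⬝ᵥ fderiv ℝ (gradFn Φ) x v := by
  simpa [← hessMat_mulVec hΦ] using hx.dotProduct_mulVec_nonneg v

end Hessian

theorem hasDerivAt_add_smul {E : Type*} [NormedAddCommGroup E] [NormedSpace ℝ E] (y c : E)
    (s : ℝ) : HasDerivAt (fun s : ℝ => y + s • c) c s := by
  simpa using ((hasDerivAt_id s).smul_const c).const_add y

theorem HasFDerivWithinAt.hasFDerivAt_comp_prodMk_right {E F : Type*} [NormedAddCommGroup E]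
    [NormedSpace ℝ E] [NormedAddCommGroup F] [NormedSpace ℝ F] {f : ℝ × E → F}
    {D : ℝ × E →L[ℝ] F} {s : Set ℝ} {t : ℝ} {x : E} (hD : HasFDerivWithinAt f D (s ×ˢ univ) (t, x))
    (ht : t ∈ s) : HasFDerivAt (fun y => f (t, y)) (D.comp (ContinuousLinearMap.inr ℝ ℝ E)) x := by
  rw [← hasFDerivWithinAt_univ]
  exact hD.comp x (hasFDerivAt_prodMk_right t x).hasFDerivWithinAt fun _ _ => ⟨ht, trivial⟩

theorem eq_zero_of_hasDerivWithinAt_clm_apply {E : Type*} [NormedAddCommGroup E]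
    [NormedSpace ℝ E] {f : ℝ → E} {A : ℝ → E →L[ℝ] E} {a b C : ℝ}
    (hf : ContinuousOn f (Icc a b)) (hf' : ∀ s ∈ Ico a b, HasDerivWithinAt f (A s (f s)) (Ici s) s)
    (hA : ∀ s ∈ Ico a b, ‖A s‖ ≤ C) (ha : f a = 0) : ∀ s ∈ Icc a b, f s = 0 := by
  intro s hs
  have hbound : ∀ r ∈ Ico a b, ‖A r (f r)‖ ≤ C * ‖f r‖ + 0 := fun r hr => by
    rw [add_zero]
    exact (A r).le_of_opNorm_le (hA r hr) (f r)
  have := norm_le_gronwallBound_of_norm_deriv_right_le hf hf' (by rw [ha, norm_zero]) hbound s hs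
  rwa [gronwallBound_ε0_δ0, norm_le_zero_iff] at this

theorem burgers_residual_eq {n : ℕ} {u : ℝ → (Fin n → ℝ) → (Fin n → ℝ)}
    {D : (ℝ × (Fin n → ℝ)) →L[ℝ] (Fin n → ℝ)} {t : ℝ} {x : Fin n → ℝ}
    (hD : HasFDerivWithinAt (fun p : ℝ × (Fin n → ℝ) => u p.1 p.2) D (Ici 0 ×ˢ univ) (t, x))
    (ht : 0 ≤ t) (i : Fin n) :
    derivWithin (fun s => u s x i) (Ici 0) t
      + ∑ j : Fin n, u t x j * fderiv ℝ (fun y => u t y i) x (Pi.single j 1) = D (1, u t x) i := by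
  have hcurve : HasDerivWithinAt (fun s : ℝ => (s, x)) ((1 : ℝ), (0 : Fin n → ℝ)) (Ici 0) t :=
    ((hasDerivAt_id t).prodMk (hasDerivAt_const t x)).hasDerivWithinAt
  have htime : HasDerivWithinAt (fun s => u s x) (D (1, 0)) (Ici 0) t := by
    exact hD.comp_hasDerivWithinAt t hcurve fun _ hs => mk_mem_prod hs (mem_univ x)
  have hspace := hD.hasFDerivAt_comp_prodMk_right (s := Ici 0) ht
  have hspace_i : HasFDerivAt (fun y => u t y i)
      ((ContinuousLinearMap.proj i).comp (D.comp (ContinuousLinearMap.inr ℝ ℝ _))) x :=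
    hasFDerivAt_pi'.1 hspace i
  rw [(hasDerivWithinAt_pi.1 htime i).derivWithin (uniqueDiffOn_Ici 0 t ht), hspace_i.fderiv]
  have hsplit : ((1 : ℝ), u t x) = (1, 0) + ∑ j, u t x j • ((0 : ℝ), Pi.single j 1) := by
    ext <;> simp [Prod.fst_sum, Prod.snd_sum, Pi.single_apply]
  rw [hsplit, map_add, map_sum]
  simp only [map_smul, Pi.add_apply, Finset.sum_apply, Pi.smul_apply, smul_eq_mul]
  rfl

namespace IsGlobalSolBurgers

variable {n : ℕ} {φ : (Fin n → ℝ) → (Fin n → ℝ)} {u : ℝ → (Fin n → ℝ) → (Fin n → ℝ)}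

theorem hasFDerivWithinAt (hu : IsGlobalSolBurgers n φ 1 u) {p : ℝ × (Fin n → ℝ)}
    (hp : 0 ≤ p.1) :
    HasFDerivWithinAt (fun p : ℝ × (Fin n → ℝ) => u p.1 p.2)
      (fderivWithin ℝ (fun p : ℝ × (Fin n → ℝ) => u p.1 p.2) (Ici 0 ×ˢ univ) p)
      (Ici 0 ×ˢ univ) p :=
  (hu.1.differentiableOn one_ne_zero p ⟨hp, trivial⟩).hasFDerivWithinAt

theorem fderivWithin_apply_one_self (hu : IsGlobalSolBurgers n φ 1 u) {t : ℝ} (ht : 0 ≤ t)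
    (x : Fin n → ℝ) :
    fderivWithin ℝ (fun p : ℝ × (Fin n → ℝ) => u p.1 p.2) (Ici 0 ×ˢ univ) (t, x) (1, u t x) = 0 :=
  funext fun i =>
    (burgers_residual_eq (hu.hasFDerivWithinAt (p := (t, x)) ht) ht i).symm.trans (hu.2.2 t ht x i)

theorem apply_add_smul (hu : IsGlobalSolBurgers n φ 1 u) (y : Fin n → ℝ) {t : ℝ} (ht : 0 ≤ t) :
    u t (y + t • φ y) = φ y := by
  set U := fun p : ℝ × (Fin n → ℝ) => u p.1 p.2
  set D := fderivWithin ℝ U (Ici 0 ×ˢ univ)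
  set γ := fun s : ℝ => (s, y + s • φ y)
  have hγ : Continuous γ := by fun_prop
  have hγmaps : MapsTo γ (Icc 0 t) (Ici 0 ×ˢ univ) := fun s hs => ⟨hs.1, trivial⟩
  have hγderiv : ∀ s, HasDerivAt γ (1, φ y) s := fun s =>
    (hasDerivAt_id s).prodMk (hasDerivAt_add_smul y (φ y) s)
  -- `D (γ s) (1, U (γ s)) = 0` makes the derivative of `U ∘ γ - φ y` linear in `U ∘ γ - φ y`.
  have hderiv : ∀ s ∈ Ico 0 t, HasDerivWithinAt (fun s => U (γ s) - φ y)
      (-(D (γ s)).comp (ContinuousLinearMap.inr ℝ ℝ _) (U (γ s) - φ y)) (Ici s) s := by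
    intro s hs
    have hU : HasDerivWithinAt (fun s => U (γ s)) (D (γ s) (1, φ y)) (Ici s) s := by
      exact (hu.hasFDerivWithinAt (p := γ s) hs.1).comp_hasDerivWithinAt s
        (hγderiv s).hasDerivWithinAt fun r hr => mk_mem_prod (hs.1.trans hr) (mem_univ _)
    refine (hU.sub_const (φ y)).congr_deriv ?_
    have hsplit : ((1 : ℝ), φ y) = (1, U (γ s)) - (0, U (γ s) - φ y) := by simp
    rw [hsplit, map_sub, hu.fderivWithin_apply_one_self hs.1]
    simp
  obtain ⟨C, hC⟩ := isCompact_Icc.exists_bound_of_continuousOn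
    ((hu.1.continuousOn_fderivWithin ((uniqueDiffOn_Ici 0).prod uniqueDiffOn_univ) le_rfl).comp
      hγ.continuousOn hγmaps)
  have hbound : ∀ s ∈ Ico 0 t, ‖-(D (γ s)).comp (ContinuousLinearMap.inr ℝ ℝ _)‖ ≤ C := by
    intro s hs
    rw [norm_neg]
    calc _ ≤ ‖D (γ s)‖ * ‖ContinuousLinearMap.inr ℝ ℝ (Fin n → ℝ)‖ := (D (γ s)).opNorm_comp_le _
      _ ≤ ‖D (γ s)‖ :=
        mul_le_of_le_one_right (norm_nonneg _) (ContinuousLinearMap.norm_inr_le_one ℝ ℝ _)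
      _ ≤ C := hC s (Ico_subset_Icc_self hs)
  have hcont : ContinuousOn (fun s => U (γ s) - φ y) (Icc 0 t) :=
    (hu.1.continuousOn.comp hγ.continuousOn hγmaps).sub continuousOn_const
  have h0 : U (γ 0) - φ y = 0 := by simp [U, γ, hu.2.1]
  exact sub_eq_zero.1 (eq_zero_of_hasDerivWithinAt_clm_apply hcont hderiv hbound h0 t ⟨ht, le_rfl⟩)

end IsGlobalSolBurgers

theorem eq_zero_of_comp_add_smul_eq {E : Type*} [NormedAddCommGroup E] [NormedSpace ℝ E]
    {g G : E → E} {A : E →L[ℝ] E} {y w : E} {t μ : ℝ} (hg : HasFDerivAt g A y)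
    (hG : DifferentiableAt ℝ G (y + t • g y)) (hGg : ∀ z, G (z + t • g z) = g z)
    (hw : A w = μ • w) (hμ : 1 + t * μ = 0) : w = 0 := by
  have hcomp : HasFDerivAt (fun z => G (z + t • g z)) ((fderiv ℝ G (y + t • g y)).comp
      (ContinuousLinearMap.id ℝ E + t • A)) y := by
    exact hG.hasFDerivAt.comp y ((hasFDerivAt_id y).add (hg.const_smul t))
  simp only [hGg] at hcomp
  have hker : (ContinuousLinearMap.id ℝ E + t • A) w = 0 :=
    calc _ = (1 + t * μ) • w := by simp [hw, smul_smul, add_smul]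
      _ = 0 := by rw [hμ, zero_smul]
  have hμw : μ • w = 0 := by
    rw [← hw, hg.unique hcomp, ContinuousLinearMap.comp_apply, hker, map_zero]
  have hμ0 : μ ≠ 0 := by
    rintro rfl
    simp at hμ
  exact (smul_eq_zero.1 hμw).resolve_left hμ0

theorem IsGlobalSolBurgers.posSemidef_hessMat {n : ℕ} {Φ : (Fin n → ℝ) → ℝ}
    {u : ℝ → (Fin n → ℝ) → (Fin n → ℝ)} (hΦ : ContDiff ℝ 2 Φ)
    (hu : IsGlobalSolBurgers n (gradFn Φ) 1 u) (x : Fin n → ℝ) : (hessMat Φ x).PosSemidef := by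
  have hH := isHermitian_hessMat hΦ x
  refine hH.posSemidef_iff_eigenvalues_nonneg.2 fun i =>
    le_of_not_gt fun (hneg : hH.eigenvalues i < 0) => ?_
  set μ := hH.eigenvalues i
  set t := -μ⁻¹
  have ht : 0 ≤ t := by simpa [t] using hneg.le
  have hw : fderiv ℝ (gradFn Φ) x (hH.eigenvectorBasis i) = μ • ⇑(hH.eigenvectorBasis i) := by
    rw [← hessMat_mulVec hΦ, hH.mulVec_eigenvectorBasis i]
  have hG : DifferentiableAt ℝ (u t) (x + t • gradFn Φ x) :=
    ((hu.hasFDerivWithinAt (p := (t, _)) ht).hasFDerivAt_comp_prodMk_right ht).differentiableAt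
  refine hH.eigenvectorBasis.orthonormal.ne_zero i (WithLp.ofLp_injective 2 ?_)
  rw [WithLp.ofLp_zero]
  exact eq_zero_of_comp_add_smul_eq
    (((contDiff_gradFn hΦ).differentiable one_ne_zero x).hasFDerivAt) hG
    (fun z => hu.apply_add_smul z ht) hw (by simp [t, hneg.ne])

theorem ContinuousLinearMap.exists_continuousLinearEquiv_coe_eq_of_injective {E : Type*}
    [NormedAddCommGroup E] [NormedSpace ℝ E] [FiniteDimensional ℝ E] (L : E →L[ℝ] E)
    (hL : Function.Injective L) : ∃ e : E ≃L[ℝ] E, (e : E →L[ℝ] E) = L :=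
  ⟨(LinearEquiv.ofInjectiveEndo L.toLinearMap hL).toContinuousLinearEquiv, rfl⟩

section DotProduct

variable {n : ℕ}

theorem sq_norm_le_dotProduct_self (v : Fin n → ℝ) : ‖v‖ ^ 2 ≤ v ⬝ᵥ v := by
  have hnorm : ‖v‖ ≤ √(v ⬝ᵥ v) := (pi_norm_le_iff_of_nonneg (Real.sqrt_nonneg _)).2 fun i =>
    Real.abs_le_sqrt (Finset.single_le_sum (f := fun j => v j * v j)
      (fun j _ => mul_self_nonneg (v j)) (Finset.mem_univ i) |>.trans_eq' (sq (v i)).symm)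
  calc ‖v‖ ^ 2 ≤ √(v ⬝ᵥ v) ^ 2 := pow_le_pow_left₀ (norm_nonneg v) hnorm 2
    _ = v ⬝ᵥ v := Real.sq_sqrt (Finset.sum_nonneg fun i _ => mul_self_nonneg (v i))

theorem dotProduct_le_card_mul_norm_mul_norm (v w : Fin n → ℝ) : v ⬝ᵥ w ≤ n * (‖v‖ * ‖w‖) := by
  calc v ⬝ᵥ w ≤ ∑ _i : Fin n, ‖v‖ * ‖w‖ := Finset.sum_le_sum fun i _ =>
        (le_abs_self _).trans ((abs_mul _ _).trans_le
          (mul_le_mul (norm_le_pi_norm v i) (norm_le_pi_norm w i) (abs_nonneg _) (norm_nonneg v)))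
    _ = n * (‖v‖ * ‖w‖) := by simp

theorem dotProduct_sub_nonneg_of_fderiv {g : (Fin n → ℝ) → (Fin n → ℝ)} (hg : Differentiable ℝ g)
    (hg' : ∀ x v, 0 ≤ v ⬝ᵥ fderiv ℝ g x v) (a b : Fin n → ℝ) : 0 ≤ (a - b) ⬝ᵥ (g a - g b) := by
  set d := a - b
  set ψ : ℝ → ℝ := fun s => d ⬝ᵥ g (b + s • d)
  have hψ : ∀ s, HasDerivAt ψ (d ⬝ᵥ fderiv ℝ g (b + s • d) d) s := by
    intro s
    have hcomp := (hg (b + s • d)).hasFDerivAt.comp_hasDerivAt s (hasDerivAt_add_smul b d s)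
    exact HasDerivAt.fun_sum fun i _ => (hasDerivAt_pi.1 hcomp i).const_mul (d i)
  have hmono : Monotone ψ := monotone_of_deriv_nonneg (fun s => (hψ s).differentiableAt)
    fun s => (hψ s).deriv ▸ hg' _ d
  have h01 := hmono zero_le_one
  simp only [ψ, zero_smul, add_zero, one_smul, d, add_sub_cancel] at h01
  rw [dotProduct_sub]
  linarith

theorem antilipschitzWith_of_dotProduct_sub {f : (Fin n → ℝ) → (Fin n → ℝ)}
    (hf : ∀ a b, (a - b) ⬝ᵥ (a - b) ≤ (a - b) ⬝ᵥ (f a - f b)) : AntilipschitzWith n f := by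
  refine AntilipschitzWith.of_le_mul_dist fun a b => ?_
  rw [dist_eq_norm, dist_eq_norm, NNReal.coe_natCast]
  have h := (sq_norm_le_dotProduct_self (a - b)).trans
    ((hf a b).trans (dotProduct_le_card_mul_norm_mul_norm _ _))
  rcases (norm_nonneg (a - b)).eq_or_lt with h0 | hpos
  · rw [← h0]
    positivity
  · nlinarith

theorem bijective_of_dotProduct_sub {f : (Fin n → ℝ) → (Fin n → ℝ)}
    {f' : (Fin n → ℝ) → (Fin n → ℝ) →L[ℝ] (Fin n → ℝ)} (hf : ∀ y, HasStrictFDerivAt f (f' y) y)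
    (hf' : ∀ y, Function.Injective (f' y))
    (hmono : ∀ a b, (a - b) ⬝ᵥ (a - b) ≤ (a - b) ⬝ᵥ (f a - f b)) : Function.Bijective f := by
  have hanti := antilipschitzWith_of_dotProduct_sub hmono
  have hcont : Continuous f := continuous_iff_continuousAt.2 fun y => (hf y).continuousAt
  have hclosed : IsClosed (range f) := by
    refine (isProperMap_iff_tendsto_cocompact.2 ⟨hcont, ?_⟩).isClosed_range
    simpa only [Metric.cobounded_eq_cocompact] using hanti.tendsto_cobounded
  have hopen : IsOpen (range f) := by
    refine isOpen_iff_mem_nhds.2 ?_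
    rintro _ ⟨y, rfl⟩
    obtain ⟨e, he⟩ := (f' y).exists_continuousLinearEquiv_coe_eq_of_injective (hf' y)
    rw [← ((he ▸ hf y : HasStrictFDerivAt f (e : _ →L[ℝ] _) y)).map_nhds_eq_of_equiv]
    exact Filter.range_mem_map
  refine ⟨hanti.injective, range_eq_univ.1 (IsClopen.eq_univ ⟨hclosed, hopen⟩ ⟨f 0, 0, rfl⟩)⟩

end DotProduct

theorem ContDiffAt.contDiffWithinAt_inverse {E F : Type*} [NormedAddCommGroup E] [NormedSpace ℝ E]
    [CompleteSpace E] [NormedAddCommGroup F] [NormedSpace ℝ F] {f : E → F} {f' : E ≃L[ℝ] F}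
    {g : F → E} {s : Set F} {p : F} {k : WithTop ℕ∞} (hf : ContDiffAt ℝ k f (g p))
    (hf' : HasFDerivAt f (f' : E →L[ℝ] F) (g p)) (hk : k ≠ 0) (hp : p ∈ s) (hfg : f (g p) = p)
    (hgf : ∀ q ∈ s, ∀ x, f x = q → g q = x) : ContDiffWithinAt ℝ k g s p := by
  have hinv := hf.to_localInverse hf' hk
  have hright := (hf.hasStrictFDerivAt' hf' hk).eventually_right_inverse
  rw [hfg] at hinv hright
  refine hinv.contDiffWithinAt.congr_of_eventuallyEq_of_mem ?_ hp
  filter_upwards [nhdsWithin_le_nhds hright, self_mem_nhdsWithin] with q hq hqs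
  exact hgf q hqs _ hq

section Flow

variable {n : ℕ} {Φ : (Fin n → ℝ) → ℝ}

noncomputable def burgersFlow (Φ : (Fin n → ℝ) → ℝ) (t : ℝ) (y : Fin n → ℝ) : Fin n → ℝ :=
  y + t • gradFn Φ y

theorem hasStrictFDerivAt_burgersFlow (hΦ : ContDiff ℝ 2 Φ) (t : ℝ) (y : Fin n → ℝ) :
    HasStrictFDerivAt (burgersFlow Φ t)
      (ContinuousLinearMap.id ℝ (Fin n → ℝ) + t • fderiv ℝ (gradFn Φ) y) y :=
  (hasStrictFDerivAt_id y).add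
    ((((contDiff_gradFn hΦ).contDiffAt).hasStrictFDerivAt one_ne_zero).const_smul t)

theorem injective_id_add_smul_fderiv_gradFn (hΦ : ContDiff ℝ 2 Φ) {y : Fin n → ℝ}
    (hy : (hessMat Φ y).PosSemidef) {t : ℝ} (ht : 0 ≤ t) :
    Function.Injective (ContinuousLinearMap.id ℝ (Fin n → ℝ) + t • fderiv ℝ (gradFn Φ) y) := by
  refine (injective_iff_map_eq_zero _).2 fun v hv => ?_
  have hdot : v ⬝ᵥ v + t * (v ⬝ᵥ fderiv ℝ (gradFn Φ) y v) = 0 := by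
    simpa [dotProduct_add] using congrArg (v ⬝ᵥ ·) hv
  have hnonneg := mul_nonneg ht (dotProduct_fderiv_gradFn_nonneg hΦ hy v)
  exact dotProduct_self_eq_zero.1
    (le_antisymm (by linarith) (Finset.sum_nonneg fun i _ => mul_self_nonneg (v i)))

theorem dotProduct_sub_le_dotProduct_burgersFlow_sub (hΦ : ContDiff ℝ 2 Φ)
    (hPSD : ∀ x, (hessMat Φ x).PosSemidef) {t : ℝ} (ht : 0 ≤ t) (a b : Fin n → ℝ) :
    (a - b) ⬝ᵥ (a - b) ≤ (a - b) ⬝ᵥ (burgersFlow Φ t a - burgersFlow Φ t b) := by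
  have hmono := dotProduct_sub_nonneg_of_fderiv ((contDiff_gradFn hΦ).differentiable one_ne_zero)
    (fun x => dotProduct_fderiv_gradFn_nonneg hΦ (hPSD x)) a b
  have hsplit :
      burgersFlow Φ t a - burgersFlow Φ t b = (a - b) + t • (gradFn Φ a - gradFn Φ b) := by
    simp only [burgersFlow, smul_sub]
    abel
  rw [hsplit, dotProduct_add, dotProduct_smul, smul_eq_mul]
  nlinarith

theorem bijective_burgersFlow (hΦ : ContDiff ℝ 2 Φ) (hPSD : ∀ x, (hessMat Φ x).PosSemidef)
    {t : ℝ} (ht : 0 ≤ t) : Function.Bijective (burgersFlow Φ t) :=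
  bijective_of_dotProduct_sub (hasStrictFDerivAt_burgersFlow hΦ t)
    (fun _ => injective_id_add_smul_fderiv_gradFn hΦ (hPSD _) ht)
    (dotProduct_sub_le_dotProduct_burgersFlow_sub hΦ hPSD ht)

end Flow

section Solution

variable {n : ℕ} {Φ : (Fin n → ℝ) → ℝ}

/-- Meaningful only for `t ≥ 0`, where `burgersFlow Φ t` is a bijection. -/
noncomputable def burgersSol (Φ : (Fin n → ℝ) → ℝ) (t : ℝ) (x : Fin n → ℝ) : Fin n → ℝ :=
  gradFn Φ (Function.invFun (burgersFlow Φ t) x)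

theorem invFun_burgersFlow_apply (hΦ : ContDiff ℝ 2 Φ) (hPSD : ∀ x, (hessMat Φ x).PosSemidef)
    {t : ℝ} (ht : 0 ≤ t) (y : Fin n → ℝ) :
    Function.invFun (burgersFlow Φ t) (burgersFlow Φ t y) = y :=
  Function.leftInverse_invFun (bijective_burgersFlow hΦ hPSD ht).1 y

theorem burgersSol_burgersFlow (hΦ : ContDiff ℝ 2 Φ) (hPSD : ∀ x, (hessMat Φ x).PosSemidef)
    {t : ℝ} (ht : 0 ≤ t) (y : Fin n → ℝ) : burgersSol Φ t (burgersFlow Φ t y) = gradFn Φ y := by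
  rw [burgersSol, invFun_burgersFlow_apply hΦ hPSD ht]

theorem contDiffOn_burgersSol (hΦ : ContDiff ℝ 2 Φ) (hPSD : ∀ x, (hessMat Φ x).PosSemidef) :
    ContDiffOn ℝ 1 (fun p : ℝ × (Fin n → ℝ) => burgersSol Φ p.1 p.2) (Ici 0 ×ˢ univ) := by
  intro p hp
  have hg := contDiff_gradFn hΦ
  set T := fun q : ℝ × (Fin n → ℝ) => (q.1, burgersFlow Φ q.1 q.2)
  set G := fun q : ℝ × (Fin n → ℝ) => (q.1, Function.invFun (burgersFlow Φ q.1) q.2)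
  have hTdiff : ContDiff ℝ 1 T :=
    contDiff_fst.prodMk (contDiff_snd.add (contDiff_fst.smul (hg.comp contDiff_snd)))
  have hT : HasFDerivAt T _ (G p) := (hasFDerivAt_fst (p := G p)).prodMk
    (hasFDerivAt_snd.add (hasFDerivAt_fst.smul
      (((hg.differentiable one_ne_zero) (G p).2).hasFDerivAt.comp (G p) hasFDerivAt_snd)))
  have hinj : Function.Injective (fderiv ℝ T (G p)) := by
    rw [hT.fderiv]
    refine (injective_iff_map_eq_zero _).2 fun ⟨s, v⟩ hsv => ?_
    simp only [ContinuousLinearMap.prod_apply, ContinuousLinearMap.coe_fst', _root_.add_apply,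
      ContinuousLinearMap.coe_snd', _root_.smul_apply, ContinuousLinearMap.comp_apply,
      ContinuousLinearMap.smulRight_apply, Prod.mk_eq_zero] at hsv
    obtain ⟨rfl, hv⟩ := hsv
    rw [zero_smul, add_zero] at hv
    have hv0 : v = 0 := (injective_iff_map_eq_zero _).1
      (injective_id_add_smul_fderiv_gradFn hΦ (hPSD (G p).2) hp.1) v hv
    rw [hv0, Prod.mk_zero_zero]
  obtain ⟨e, he⟩ := (fderiv ℝ T (G p)).exists_continuousLinearEquiv_coe_eq_of_injective hinj
  have hG : ContDiffWithinAt ℝ 1 G (Ici 0 ×ˢ univ) p := by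
    refine hTdiff.contDiffAt.contDiffWithinAt_inverse (he ▸ hT.differentiableAt.hasFDerivAt)
      one_ne_zero hp ?_ ?_
    · exact Prod.ext rfl (Function.invFun_eq ((bijective_burgersFlow hΦ hPSD hp.1).2 p.2))
    · rintro q hq x rfl
      exact Prod.ext rfl (invFun_burgersFlow_apply hΦ hPSD hq.1 x.2)
  exact hg.contDiffAt.comp_contDiffWithinAt p (contDiffAt_snd.comp_contDiffWithinAt p hG)

theorem fderivWithin_burgersSol_apply_one_self (hΦ : ContDiff ℝ 2 Φ)
    (hPSD : ∀ x, (hessMat Φ x).PosSemidef) {t : ℝ} (ht : 0 ≤ t) (x : Fin n → ℝ) :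
    fderivWithin ℝ (fun p : ℝ × (Fin n → ℝ) => burgersSol Φ p.1 p.2) (Ici 0 ×ˢ univ) (t, x)
      (1, burgersSol Φ t x) = 0 := by
  obtain ⟨y, rfl⟩ := (bijective_burgersFlow hΦ hPSD ht).2 x
  have hD := ((contDiffOn_burgersSol hΦ hPSD).differentiableOn one_ne_zero _
    (mk_mem_prod ht (mem_univ (burgersFlow Φ t y)))).hasFDerivWithinAt
  have hchar : HasDerivWithinAt (fun s => burgersSol Φ s (burgersFlow Φ s y))
      (fderivWithin ℝ (fun p : ℝ × (Fin n → ℝ) => burgersSol Φ p.1 p.2) (Ici 0 ×ˢ univ)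
        (t, burgersFlow Φ t y) (1, gradFn Φ y)) (Ici 0) t := by
    exact hD.comp_hasDerivWithinAt t
      ((hasDerivAt_id t).prodMk (hasDerivAt_add_smul y (gradFn Φ y) t)).hasDerivWithinAt
      fun s hs => mk_mem_prod hs (mem_univ _)
  have hconst : HasDerivWithinAt (fun s => burgersSol Φ s (burgersFlow Φ s y)) 0 (Ici 0) t :=
    (hasDerivWithinAt_const t _ (gradFn Φ y)).congr
      (fun s hs => burgersSol_burgersFlow hΦ hPSD hs y) (burgersSol_burgersFlow hΦ hPSD ht y)
  rw [burgersSol_burgersFlow hΦ hPSD ht y]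
  exact (uniqueDiffOn_Ici 0 t ht).eq_deriv _ hchar hconst

theorem isGlobalSolBurgers_burgersSol (hΦ : ContDiff ℝ 2 Φ)
    (hPSD : ∀ x, (hessMat Φ x).PosSemidef) : IsGlobalSolBurgers n (gradFn Φ) 1 (burgersSol Φ) := by
  refine ⟨contDiffOn_burgersSol hΦ hPSD, fun x => ?_, fun t ht x i => ?_⟩
  · simpa [burgersFlow] using burgersSol_burgersFlow hΦ hPSD le_rfl x
  · rw [burgers_residual_eq ((contDiffOn_burgersSol hΦ hPSD).differentiableOn one_ne_zero _
      (mk_mem_prod ht (mem_univ x))).hasFDerivWithinAt ht,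
      fderivWithin_burgersSol_apply_one_self hΦ hPSD ht x, Pi.zero_apply]

end Solution

theorem burgers_global_C1_solution_iff_hessian_posSemidef_general
    (n : ℕ) (Φ : (Fin n → ℝ) → ℝ) (hΦ : ContDiff ℝ 2 Φ) :
    ((∃ u, IsGlobalSolBurgers n (gradFn Φ) 1 u) ∧
        ∀ u v, IsGlobalSolBurgers n (gradFn Φ) 1 u → IsGlobalSolBurgers n (gradFn Φ) 1 v →
          ∀ t ∈ Set.Ici (0 : ℝ), ∀ x, u t x = v t x) ↔
      ∀ x : Fin n → ℝ, (hessMat Φ x).PosSemidef := by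
  refine ⟨fun ⟨⟨u, hu⟩, _⟩ => hu.posSemidef_hessMat hΦ, fun hPSD => ?_⟩
  refine ⟨⟨burgersSol Φ, isGlobalSolBurgers_burgersSol hΦ hPSD⟩, fun u v hu hv t ht x => ?_⟩
  obtain ⟨y, rfl⟩ := (bijective_burgersFlow hΦ hPSD ht).2 x
  rw [burgersFlow, hu.apply_add_smul y ht, hv.apply_add_smul y ht]

/-- the Cauchy problem for the multidimensional Burgers system with
initial data `∇Φ` (with `Φ` of class `C²` and `∇Φ` of bounded `C¹` norm) has a unique
global `C¹` solution on `[0,∞) × ℝⁿ` iff `Hess Φ(x)` is positive semidefinite for all `x`. -/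
theorem burgers_global_C1_solution_iff_hessian_posSemidef
    (n : ℕ) (Φ : (Fin n → ℝ) → ℝ) (hΦ : ContDiff ℝ 2 Φ)
    (hbd : ∃ K : ℝ, ∀ x, ‖gradFn Φ x‖ ≤ K ∧ ‖iteratedFDeriv ℝ 1 (gradFn Φ) x‖ ≤ K) :
    ((∃ u, IsGlobalSolBurgers n (gradFn Φ) 1 u) ∧
        ∀ u v, IsGlobalSolBurgers n (gradFn Φ) 1 u → IsGlobalSolBurgers n (gradFn Φ) 1 v →
          ∀ t ∈ Set.Ici (0 : ℝ), ∀ x, u t x = v t x) ↔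
      ∀ x : Fin n → ℝ, (hessMat Φ x).PosSemidef :=
  burgers_global_C1_solution_iff_hessian_posSemidef_general n Φ hΦ
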